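/- arXiv:1208.3058 — 8 statements merged into one kernel-verified Lean document; each statement's English description precedes it below -/
import Mathlib

section
/- Let x ∈ ℓ¹ be a sequence not eventually zero. Then E(x) is a nonempty perfect compact subset of ℝ. -/
open Set Filter Topology

/-- The achievement set (set of all subsums) of a series `∑ x n`. -/
noncomputable def achSet (x : ℕ → ℝ) : Set ℝ :=
  {a : ℝ | ∃ A : Set ℕ, HasSum (fun n : A => x n) a}

/-- The tail sum `∑_{i > n} |x i|`. -/
noncomputable def tailSum (x : ℕ → ℝ) (n : ℕ) : ℝ := ∑' i : ℕ, |x (n + 1 + i)|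

/-- `S` is a finite union of closed intervals. -/
def IsFinUnionClosedIntervals (S : Set ℝ) : Prop :=
  ∃ s : Finset (ℝ × ℝ), S = ⋃ p ∈ s, Set.Icc p.1 p.2

/-- `S` is homeomorphic to the Cantor set (the Cantor space `ℕ → Bool`). -/
def CantorLike (S : Set ℝ) : Prop := Nonempty (S ≃ₜ (ℕ → Bool))

/-!
The subsum map `ε ↦ ∑' n, {n | ε n}.indicator x n` on the compact Cantor space `ℕ → Bool` is
continuous by the Weierstrass M-test with majorant `|x n|`, and its range is `E(x)`, so `E(x)` is
compact. It is perfect because toggling a single index `n` moves a subsum by `x n`, and `x` has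
nonzero terms of arbitrarily small size.
-/

section Subsum

variable {E : Type*} [NormedAddCommGroup E] [CompleteSpace E]

noncomputable def subsum (x : ℕ → E) (ε : ℕ → Bool) : E :=
  ∑' n, {n | ε n}.indicator x n

theorem continuous_subsum {x : ℕ → E} (hx : Summable fun n => ‖x n‖) :
    Continuous (subsum x) := by
  refine continuous_tsum (fun n => ?_) hx fun n ε => ?_
  · have : (fun ε : ℕ → Bool => {n | ε n}.indicator x n) = fun ε => bif ε n then x n else 0 := by
      ext ε
      cases h : ε n <;> simp [h]
    rw [this]
    exact (continuous_of_discreteTopology (f := fun b : Bool => bif b then x n else 0)).comp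
      (continuous_apply n)
  · exact norm_indicator_le_norm_self x n

end Subsum

theorem mem_achSet_iff {x : ℕ → ℝ} {a : ℝ} :
    a ∈ achSet x ↔ ∃ A : Set ℕ, HasSum (A.indicator x) a :=
  exists_congr fun _ => hasSum_subtype_iff_indicator

theorem zero_mem_achSet (x : ℕ → ℝ) : (0 : ℝ) ∈ achSet x :=
  mem_achSet_iff.mpr ⟨∅, by simp [hasSum_zero]⟩

theorem achSet_eq_range_subsum {x : ℕ → ℝ} (hx : Summable x) :
    achSet x = Set.range (subsum x) := by
  ext a
  rw [mem_achSet_iff]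
  classical
  constructor
  · rintro ⟨A, hA⟩
    refine ⟨fun n => decide (n ∈ A), ?_⟩
    simp [subsum, hA.tsum_eq]
  · rintro ⟨ε, rfl⟩
    exact ⟨{n | ε n}, (hx.indicator _).hasSum⟩

theorem isCompact_achSet {x : ℕ → ℝ} (hx : Summable fun n => |x n|) : IsCompact (achSet x) := by
  rw [achSet_eq_range_subsum hx.of_abs]
  exact isCompact_range (continuous_subsum hx)

theorem add_mem_achSet_or_sub_mem_achSet {x : ℕ → ℝ} {a : ℝ} (ha : a ∈ achSet x) (n : ℕ) :
    a + x n ∈ achSet x ∨ a - x n ∈ achSet x := by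
  classical
  obtain ⟨A, hA⟩ := mem_achSet_iff.mp ha
  have hn : HasSum (({n} : Set ℕ).indicator x) (x n) := by
    rw [Set.indicator_singleton]
    exact hasSum_pi_single n (x n)
  by_cases hnA : n ∈ A
  · right
    refine mem_achSet_iff.mpr ⟨A \ {n}, ?_⟩
    rw [Set.indicator_sdiff (Set.singleton_subset_iff.mpr hnA)]
    exact hA.sub hn
  · left
    refine mem_achSet_iff.mpr ⟨A ∪ {n}, ?_⟩
    rw [Set.indicator_union_of_disjoint (Set.disjoint_singleton_right.mpr hnA)]
    exact hA.add hn

theorem exists_ne_zero_abs_lt {x : ℕ → ℝ} (hx : Tendsto x atTop (𝓝 0))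
    (hnz : ∀ N : ℕ, ∃ n ≥ N, x n ≠ 0) {δ : ℝ} (hδ : 0 < δ) : ∃ n, x n ≠ 0 ∧ |x n| < δ := by
  obtain ⟨N, hN⟩ := eventually_atTop.mp (hx.eventually (Metric.ball_mem_nhds 0 hδ))
  obtain ⟨n, hnN, hn0⟩ := hnz N
  exact ⟨n, hn0, by simpa [Real.dist_eq] using hN n hnN⟩

theorem accPt_achSet {x : ℕ → ℝ} (hx : Summable x) (hnz : ∀ N : ℕ, ∃ n ≥ N, x n ≠ 0)
    {a : ℝ} (ha : a ∈ achSet x) : AccPt a (𝓟 (achSet x)) := by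
  rw [accPt_iff_nhds]
  intro U hU
  obtain ⟨δ, hδ, hball⟩ := Metric.mem_nhds_iff.mp hU
  obtain ⟨n, hn0, hnδ⟩ := exists_ne_zero_abs_lt hx.tendsto_atTop_zero hnz hδ
  rcases add_mem_achSet_or_sub_mem_achSet ha n with h | h <;>
    exact ⟨_, ⟨hball (by simpa [Real.dist_eq] using hnδ), h⟩, by simpa using hn0⟩

theorem achSet_perfect_compact (x : ℕ → ℝ) (hx : Summable fun n => |x n|)
    (hnz : ∀ N : ℕ, ∃ n ≥ N, x n ≠ 0) :
    (achSet x).Nonempty ∧ Perfect (achSet x) ∧ IsCompact (achSet x) :=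
  ⟨⟨0, zero_mem_achSet x⟩,
    ⟨(isCompact_achSet hx).isClosed, fun _ ha => accPt_achSet hx.of_abs hnz ha⟩,
    isCompact_achSet hx⟩
end

section
/- Let x ∈ ℓ¹ be a nonnegative nonincreasing sequence satisfying x(n) ≤ ∑_{i>n} x(i) for all n. Then E(x) = [0, ∑_{n} x(n)], i.e., E(x) is a closed interval. -/
open Set Filter Topology

/-!
A target `t ∈ [0, ∑ x]` is reached by the greedy algorithm: take `x n` whenever it does not
overshoot `t`. Taking `x n` keeps `t - (partial sum)` below the remaining tail, and skipping it
means `t - (partial sum) < x n`, which is again below the remaining tail by `x n ≤ ∑_{i>n} x i`.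
Since the tails tend to `0`, the greedy partial sums converge to `t`.
-/

theorem achSet_subset_Icc {x : ℕ → ℝ} (hx : Summable x) (hpos : ∀ n, 0 ≤ x n) :
    achSet x ⊆ Icc 0 (∑' n, x n) := by
  rintro a ⟨A, hA⟩
  replace hA := hasSum_subtype_iff_indicator.mp hA
  exact ⟨hasSum_le (indicator_nonneg fun n _ => hpos n) hasSum_zero hA,
    hasSum_le (indicator_le_self' fun n _ => hpos n) hA hx.hasSum⟩

noncomputable def greedySum (x : ℕ → ℝ) (t : ℝ) : ℕ → ℝ
  | 0 => 0
  | n + 1 => greedySum x t n + if greedySum x t n + x n ≤ t then x n else 0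

def greedySet (x : ℕ → ℝ) (t : ℝ) : Set ℕ := {n | greedySum x t n + x n ≤ t}

section Greedy

variable {x : ℕ → ℝ} {t : ℝ}

theorem greedySum_succ (n : ℕ) :
    greedySum x t (n + 1) = greedySum x t n + (greedySet x t).indicator x n := by
  simp only [greedySum, greedySet, indicator_apply, mem_ofPred_eq]

theorem greedySum_eq_sum_indicator (n : ℕ) :
    greedySum x t n = ∑ i ∈ Finset.range n, (greedySet x t).indicator x i := by
  induction n with
  | zero => rfl
  | succ n ih => rw [greedySum_succ, Finset.sum_range_succ, ih]

theorem greedySum_le (ht : 0 ≤ t) (n : ℕ) : greedySum x t n ≤ t := by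
  induction n with
  | zero => exact ht
  | succ n ih =>
    rw [greedySum]
    split_ifs with h
    · exact h
    · simpa using ih

theorem sub_greedySum_le_tsum (hx : Summable x) (hsmall : ∀ n, x n ≤ ∑' i, x (i + (n + 1)))
    (ht : t ≤ ∑' n, x n) (n : ℕ) : t - greedySum x t n ≤ ∑' i, x (i + n) := by
  induction n with
  | zero => simpa [greedySum] using ht
  | succ n ih =>
    have htail : ∑' i, x (i + n) = x n + ∑' i, x (i + (n + 1)) := by
      have := (hx.comp_injective (add_left_injective n)).tsum_eq_zero_add
      simpa only [Function.comp_def, zero_add, add_right_comm _ 1 n, add_assoc] using this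
    rw [greedySum]
    split_ifs with h
    · linarith
    · linarith [hsmall n, not_le.mp h]

theorem hasSum_greedySet (hx : Summable x) (hsmall : ∀ n, x n ≤ ∑' i, x (i + (n + 1)))
    (ht₀ : 0 ≤ t) (ht : t ≤ ∑' n, x n) : HasSum (fun n : greedySet x t => x n) t := by
  refine hasSum_subtype_iff_indicator.mpr ((hx.indicator _).hasSum_iff_tendsto_nat.mpr ?_)
  simp_rw [← greedySum_eq_sum_indicator]
  refine tendsto_of_tendsto_of_tendsto_of_le_of_le (g := fun n => t - ∑' i, x (i + n)) ?_
    tendsto_const_nhds (fun n => ?_) (greedySum_le ht₀)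
  · simpa using tendsto_const_nhds.sub (tendsto_sum_nat_add x)
  · linarith [sub_greedySum_le_tsum hx hsmall ht n]

theorem Icc_subset_achSet (hx : Summable x) (hsmall : ∀ n, x n ≤ ∑' i, x (i + (n + 1))) :
    Icc 0 (∑' n, x n) ⊆ achSet x :=
  fun _ ht => ⟨_, hasSum_greedySet hx hsmall ht.1 ht.2⟩

end Greedy

theorem tailSum_eq_tsum {x : ℕ → ℝ} (hpos : ∀ n, 0 ≤ x n) (n : ℕ) :
    tailSum x n = ∑' i, x (i + (n + 1)) :=
  tsum_congr fun i => by rw [abs_of_nonneg (hpos _), add_comm]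

theorem achSet_eq_Icc_general (x : ℕ → ℝ) (hx : Summable x) (hpos : ∀ n, 0 ≤ x n)
    (hsmall : ∀ n, x n ≤ tailSum x n) :
    achSet x = Set.Icc 0 (∑' n, x n) :=
  (achSet_subset_Icc hx hpos).antisymm
    (Icc_subset_achSet hx fun n => (hsmall n).trans_eq (tailSum_eq_tsum hpos n))

theorem achSet_eq_Icc (x : ℕ → ℝ) (hx : Summable x) (hpos : ∀ n, 0 ≤ x n)
    (hmono : ∀ n, x (n + 1) ≤ x n) (hsmall : ∀ n, x n ≤ tailSum x n) :
    achSet x = Set.Icc 0 (∑' n, x n) :=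
  achSet_eq_Icc_general x hx hpos hsmall
end

section
/- The map E : ℓ¹ → H(ℝ) sending x to its achievement set E(x) is Lipschitz with constant 1 with respect to the ℓ¹ norm and the Hausdorff distance on nonempty compact subsets of ℝ. -/
open Set Filter Topology

/-!
Move a subsum `∑_{n ∈ A} x n` to the subsum `∑_{n ∈ A} y n` over the same index set: the two differ
by `∑_{n ∈ A} (x n - y n)`, which is at most `∑ |x n - y n| = ‖x - y‖₁` in absolute value. Hence
every point of either achievement set lies within `‖x - y‖₁` of the other one.
-/

namespace lp

variable {ι : Type*} {E : ι → Type*} [∀ i, NormedAddCommGroup (E i)]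

theorem summable_norm_of_one (f : lp E 1) : Summable fun i => ‖f i‖ := by
  simpa using (lp.memℓp f).summable (by norm_num)

theorem norm_eq_tsum_norm_of_one (f : lp E 1) : ‖f‖ = ∑' i, ‖f i‖ := by
  simp [lp.norm_eq_tsum_rpow (p := 1) (by norm_num)]

end lp

theorem exists_mem_achSet_dist_le {x y : ℕ → ℝ} (hy : Summable y)
    (hxy : Summable fun n => dist (x n) (y n)) {a : ℝ} (ha : a ∈ achSet x) :
    ∃ b ∈ achSet y, dist a b ≤ ∑' n, dist (x n) (y n) := by
  obtain ⟨A, hA⟩ := ha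
  have hyA : Summable fun n : A => y n := hy.subtype A
  refine ⟨∑' n : A, y n, ⟨A, hyA.hasSum⟩, ?_⟩
  calc dist a (∑' n : A, y n) = ‖∑' n : A, (x n - y n)‖ := by
        rw [dist_eq_norm, ← hA.tsum_eq, hA.summable.tsum_sub hyA]
    _ ≤ ∑' n : A, dist (x n) (y n) := norm_tsum_le_tsum_norm (hxy.subtype A)
    _ ≤ ∑' n, dist (x n) (y n) := hxy.tsum_subtype_le _ A fun _ => dist_nonneg

theorem achSet_lipschitz (x y : lp (fun _ : ℕ => ℝ) 1) :
    Metric.hausdorffDist (achSet fun n => x n) (achSet fun n => y n) ≤ ‖x - y‖ := by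
  have hdist : ‖x - y‖ = ∑' n, dist (x n) (y n) := by
    simp [lp.norm_eq_tsum_norm_of_one, dist_eq_norm]
  have hsummable : Summable fun n => dist (x n) (y n) := by
    simpa [dist_eq_norm] using lp.summable_norm_of_one (x - y)
  rw [hdist]
  refine Metric.hausdorffDist_le_of_mem_dist (tsum_nonneg fun _ => dist_nonneg)
    (fun a ha => exists_mem_achSet_dist_le (lp.memℓp y).summable_of_one hsummable ha)
    fun b hb => ?_
  simp_rw [dist_comm (x _)] at hsummable ⊢
  exact exists_mem_achSet_dist_le (lp.memℓp x).summable_of_one hsummable hb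
end

section
/- Let r₁ < r₂ < ... < r_m be reals greater than 1, let β₁, ..., β_m be nonzero reals, let 0 < q < 1/2, and define x(n) = β₁ q^{n r₁} + ... + β_m q^{n r_m}. Then there exists n₀ such that |x(n)| > ∑_{i>n} |x(i)| for all n ≥ n₀. -/
open Set Filter Topology

/-!
With `c i = q ^ r i` the sequence is `x n = ∑ i, β i * c i ^ n`, and `c` is strictly decreasing, so
`x n = β₀ c₀ ^ n + o(c₀ ^ n)`. Once the error is below `δ c₀ ^ n`, the tail is at most the geometric
sum `(|β₀| + δ) c₀ ^ (n + 1) / (1 - c₀)`, while `|x n| ≥ (|β₀| - δ) c₀ ^ n`; since `c₀ < q < 1/2`,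
the first is smaller for `δ = |β₀| (1 - 2 c₀) / 2`.
-/

open Asymptotics

lemma tailSum_le_of_abs_le_geometric {x : ℕ → ℝ} {a B : ℝ} (ha0 : 0 ≤ a) (ha1 : a < 1) {n : ℕ}
    (hx : ∀ i, |x (n + 1 + i)| ≤ B * a ^ (n + 1 + i)) :
    tailSum x n ≤ B * a ^ (n + 1) / (1 - a) := by
  have hgeom : HasSum (fun i => B * a ^ (n + 1 + i)) (B * a ^ (n + 1) / (1 - a)) := by
    simp_rw [pow_add, ← mul_assoc, div_eq_mul_inv]
    exact (hasSum_geometric_of_lt_one ha0 ha1).mul_left _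
  have hsum : Summable fun i => |x (n + 1 + i)| :=
    hgeom.summable.of_nonneg_of_le (fun _ => abs_nonneg _) hx
  exact (hsum.tsum_le_tsum hx hgeom.summable).trans_eq hgeom.tsum_eq

lemma eventually_tailSum_lt_abs_of_isLittleO {x : ℕ → ℝ} {a L : ℝ} (ha0 : 0 < a) (ha : a < 1 / 2)
    (hL : L ≠ 0) (hx : (fun n => x n - L * a ^ n) =o[atTop] fun n => a ^ n) :
    ∀ᶠ n in atTop, tailSum x n < |x n| := by
  set δ := |L| * (1 - 2 * a) / 2 with hδ_def
  have hδ : 0 < δ := half_pos (mul_pos (abs_pos.2 hL) (by linarith))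
  obtain ⟨N, hN⟩ := eventually_atTop.1 (hx.bound hδ)
  have herr : ∀ n ≥ N, |x n - L * a ^ n| ≤ δ * a ^ n := fun n hn => by
    simpa [abs_of_pos ha0] using hN n hn
  have habsL : ∀ n, |L * a ^ n| = |L| * a ^ n := fun n => by
    rw [abs_mul, abs_of_pos (pow_pos ha0 n)]
  refine eventually_atTop.2 ⟨N, fun n hn => ?_⟩
  have hlower : (|L| - δ) * a ^ n ≤ |x n| := by
    have := abs_sub_abs_le_abs_sub (L * a ^ n) (x n)
    rw [abs_sub_comm, habsL] at this
    linarith [herr n hn]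
  have htail : tailSum x n ≤ (|L| + δ) * a ^ (n + 1) / (1 - a) := by
    refine tailSum_le_of_abs_le_geometric ha0.le (by linarith) fun i => ?_
    have := abs_sub_abs_le_abs_sub (x (n + 1 + i)) (L * a ^ (n + 1 + i))
    rw [habsL] at this
    linarith [herr (n + 1 + i) (by omega)]
  have hgap : (|L| - δ) * a ^ n * (1 - a) - (|L| + δ) * a ^ (n + 1) = δ * a ^ n := by
    rw [hδ_def]; ring
  have hlt : (|L| + δ) * a ^ (n + 1) / (1 - a) < (|L| - δ) * a ^ n := by
    rw [div_lt_iff₀ (by linarith)]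
    linarith [mul_pos hδ (pow_pos ha0 n)]
  linarith

lemma isLittleO_sum_sub_dominant {ι : Type*} [Fintype ι] (β c : ι → ℝ) {i₀ : ι}
    (hc : ∀ i, 0 ≤ c i) (hlt : ∀ i ≠ i₀, c i < c i₀) :
    (fun n : ℕ => ∑ i, β i * c i ^ n - β i₀ * c i₀ ^ n) =o[atTop] fun n => c i₀ ^ n := by
  classical
  simp_rw [← Finset.sum_erase_add _ _ (Finset.mem_univ i₀), add_sub_cancel_right]
  exact IsLittleO.fun_sum fun i hi =>
    (isLittleO_pow_pow_of_lt_left (hc i) (hlt i (Finset.ne_of_mem_erase hi))).const_mul_left _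

theorem fast_decay_of_geometric_combination (m : ℕ) (hm : 0 < m) (r β : Fin m → ℝ)
    (hr : StrictMono r) (hr1 : ∀ i, 1 < r i) (hβ : ∀ i, β i ≠ 0)
    (q : ℝ) (hq0 : 0 < q) (hq : q < 1 / 2) :
    ∃ n₀ : ℕ, ∀ n ≥ n₀,
      tailSum (fun n : ℕ => ∑ i, β i * q ^ ((n : ℝ) * r i)) n <
        |∑ i, β i * q ^ ((n : ℝ) * r i)| := by
  have hq1 : q < 1 := by linarith
  let i₀ : Fin m := ⟨0, hm⟩
  have hpow : ∀ i (n : ℕ), q ^ ((n : ℝ) * r i) = (q ^ r i) ^ n := fun i n => by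
    rw [mul_comm, Real.rpow_mul hq0.le, Real.rpow_natCast]
  have hdecr : ∀ i ≠ i₀, q ^ r i < q ^ r i₀ := fun i hi =>
    Real.rpow_lt_rpow_of_exponent_gt hq0 hq1
      (hr (lt_of_le_of_ne (Fin.le_def.2 i.val.zero_le) (Ne.symm hi)))
  have hsmall : q ^ r i₀ < 1 / 2 := by
    have := Real.rpow_lt_rpow_of_exponent_gt hq0 hq1 (hr1 i₀)
    rw [Real.rpow_one] at this
    linarith
  simp_rw [hpow]
  exact eventually_atTop.1 <| eventually_tailSum_lt_abs_of_isLittleO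
    (Real.rpow_pos_of_pos hq0 _) hsmall (hβ i₀)
    (isLittleO_sum_sub_dominant β _ (fun i => (Real.rpow_pos_of_pos hq0 _).le) hdecr)
end

section
/- Let 1 < p₁ < p₂ < ... < p_m be reals and β₁, ..., β_m nonzero reals, and define x(n) = β₁/n^{p₁} + ... + β_m/n^{p_m}. Then there exists n₀ such that |x(n)| ≤ ∑_{i>n} |x(i)| for all n ≥ n₀. -/
open Set Filter Topology

/-! If `p₁` is the smallest exponent, then `x n * n ^ p₁ → β₁ ≠ 0`. Hence every shifted
sequence `x (n + k) * n ^ p₁` has the same limit, so `(|x (n+1)| + |x (n+2)| - |x n|) * n ^ p₁`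
tends to `|β₁| > 0`: eventually two terms of the tail already outweigh `|x n|`. -/

theorem tendsto_sum_div_rpow_mul_rpow {ι : Type*} [Fintype ι] (p β : ι → ℝ) (i₀ : ι)
    (hmin : ∀ i ≠ i₀, p i₀ < p i) :
    Tendsto (fun n : ℕ => (∑ i, β i / (n : ℝ) ^ p i) * (n : ℝ) ^ p i₀) atTop (𝓝 (β i₀)) := by
  classical
  have hterm : ∀ i, Tendsto (fun n : ℕ => β i * (n : ℝ) ^ (p i₀ - p i)) atTop
      (𝓝 (if i = i₀ then β i₀ else 0)) := by
    intro i
    by_cases hi : i = i₀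
    · subst hi
      simp
    · have hdecay : Tendsto (fun n : ℕ => (n : ℝ) ^ (-(p i - p i₀))) atTop (𝓝 0) :=
        (tendsto_rpow_neg_atTop (sub_pos.2 (hmin i hi))).comp tendsto_natCast_atTop_atTop
      simpa [hi] using hdecay.const_mul (β i)
  have hsum := tendsto_finsetSum Finset.univ fun i _ => hterm i
  rw [Finset.sum_ite_eq' Finset.univ i₀, if_pos (Finset.mem_univ _)] at hsum
  refine hsum.congr' ?_
  filter_upwards [eventually_gt_atTop 0] with n hn
  have hn : (0 : ℝ) < n := Nat.cast_pos.2 hn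
  rw [Finset.sum_mul]
  refine Finset.sum_congr rfl fun i _ => ?_
  rw [Real.rpow_sub hn]
  ring

theorem tendsto_comp_add_mul_rpow {u : ℕ → ℝ} {q L : ℝ}
    (hu : Tendsto (fun n : ℕ => u n * (n : ℝ) ^ q) atTop (𝓝 L)) (k : ℕ) :
    Tendsto (fun n : ℕ => u (n + k) * (n : ℝ) ^ q) atTop (𝓝 L) := by
  have hshift : Tendsto (fun n : ℕ => u (n + k) * ((n + k : ℕ) : ℝ) ^ q) atTop (𝓝 L) :=
    hu.comp (tendsto_add_atTop_nat k)
  have hratio : Tendsto (fun n : ℕ => ((n : ℝ) / (n + k)) ^ q) atTop (𝓝 1) := by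
    simpa [Function.comp_def] using
      (Real.continuousAt_rpow_const 1 q (Or.inl one_ne_zero)).tendsto.comp
        (tendsto_natCast_div_add_atTop (k : ℝ))
  refine (by simpa using hshift.mul hratio : Tendsto _ atTop (𝓝 L)).congr' ?_
  filter_upwards [eventually_gt_atTop 0] with n hn
  have hn : (0 : ℝ) < n := Nat.cast_pos.2 hn
  rw [Real.div_rpow hn.le (by positivity)]
  field_simp

theorem eventually_abs_le_abs_add_abs_of_tendsto_mul_rpow {u : ℕ → ℝ} {q L : ℝ}
    (hu : Tendsto (fun n : ℕ => u n * (n : ℝ) ^ q) atTop (𝓝 L)) (hL : L ≠ 0) :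
    ∀ᶠ n in atTop, |u n| ≤ |u (n + 1)| + |u (n + 2)| := by
  have habs : ∀ k, Tendsto (fun n : ℕ => |u (n + k)| * (n : ℝ) ^ q) atTop (𝓝 |L|) := by
    intro k
    refine (tendsto_comp_add_mul_rpow hu k).abs.congr' ?_
    filter_upwards with n
    rw [abs_mul, abs_of_nonneg (Real.rpow_nonneg n.cast_nonneg q)]
  have hgap : Tendsto (fun n : ℕ => (|u (n + 1)| + |u (n + 2)| - |u (n + 0)|) * (n : ℝ) ^ q)
      atTop (𝓝 (|L| + |L| - |L|)) := by
    simpa only [add_mul, sub_mul] using ((habs 1).add (habs 2)).sub (habs 0)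
  filter_upwards [hgap.eventually_const_lt (u := 0) (by simpa using hL), eventually_gt_atTop 0]
    with n hpos hn
  have hnq : (0 : ℝ) < (n : ℝ) ^ q := Real.rpow_pos_of_pos (Nat.cast_pos.2 hn) q
  simpa using (pos_of_mul_pos_left hpos hnq.le).le

theorem sum_range_abs_le_tailSum {x : ℕ → ℝ} (hx : Summable fun n => |x n|) (n k : ℕ) :
    ∑ i ∈ Finset.range k, |x (n + 1 + i)| ≤ tailSum x n :=
  (hx.comp_injective (add_right_injective (n + 1))).sum_le_tsum _ fun _ _ => abs_nonneg _

theorem summable_sum_div_rpow {ι : Type*} [Fintype ι] (p β : ι → ℝ) (hp : ∀ i, 1 < p i) :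
    Summable fun n : ℕ => ∑ i, β i / (n : ℝ) ^ p i :=
  summable_sum fun i _ => by
    simpa [div_eq_mul_inv] using (Real.summable_nat_rpow_inv.2 (hp i)).mul_left (β i)

theorem slow_decay_of_power_combination (m : ℕ) (hm : 0 < m) (p β : Fin m → ℝ)
    (hp : StrictMono p) (hp1 : ∀ i, 1 < p i) (hβ : ∀ i, β i ≠ 0) :
    ∃ n₀ : ℕ, ∀ n ≥ n₀,
      |∑ i, β i / (n : ℝ) ^ (p i)| ≤
        tailSum (fun n : ℕ => ∑ i, β i / (n : ℝ) ^ (p i)) n := by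
  let i₀ : Fin m := ⟨0, hm⟩
  have hmin : ∀ i ≠ i₀, p i₀ < p i := fun i hi =>
    hp (by simpa [Fin.lt_def, i₀, Fin.ext_iff, Nat.pos_iff_ne_zero] using hi)
  have hlim := tendsto_sum_div_rpow_mul_rpow p β i₀ hmin
  obtain ⟨n₀, hn₀⟩ :=
    (eventually_abs_le_abs_add_abs_of_tendsto_mul_rpow hlim (hβ i₀)).exists_forall_of_atTop
  have htail := sum_range_abs_le_tailSum (summable_abs_iff.2 (summable_sum_div_rpow p β hp1))
  refine ⟨n₀, fun n hn => (hn₀ n hn).trans ?_⟩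
  simpa [Finset.sum_range_succ, add_assoc, one_add_one_eq_two] using htail n 2
end

section
/- Let q₁ > q₂ > ... > q_m be in [1/6, 2/11) and β₁, ..., β_m real numbers, not all zero. Then for all sufficiently large n, 2|β₁q₁ⁿ + ... + β_m q_mⁿ| > 9 ∑_{k>n} |β₁q₁ᵏ + ... + β_m q_mᵏ|. -/
open Set Filter Topology

/-!
Let `r = q i₀` be the largest `q i` with `β i ≠ 0`. Then `f n = ∑ i, β i * q i ^ n` behaves like
`β i₀ * r ^ n`: after division by `r ^ n`, `|f n|` tends to `c = |β i₀| > 0` and, by dominated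
convergence, the tail `∑_{k > n} |f k|` tends to `c * r / (1 - r)`. The estimate therefore reduces
to `9 * r / (1 - r) < 2`, i.e. to `r < 2 / 11`.
-/

theorem tendsto_sum_mul_pow_div_pow {ι : Type*} [Fintype ι] {β q : ι → ℝ} {i₀ : ι}
    (hq₀ : 0 < q i₀) (hdom : ∀ i ≠ i₀, β i ≠ 0 → |q i| < q i₀) :
    Tendsto (fun n : ℕ => (∑ i, β i * q i ^ n) / q i₀ ^ n) atTop (𝓝 (β i₀)) := by
  classical
  have hterm : ∀ i, Tendsto (fun n : ℕ => β i * (q i / q i₀) ^ n) atTop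
      (𝓝 (if i = i₀ then β i₀ else 0)) := by
    intro i
    split_ifs with h
    · subst h; simp [div_self hq₀.ne']
    rcases eq_or_ne (β i) 0 with hβ | hβ
    · simp [hβ]
    · have hlt : |q i / q i₀| < 1 := by
        rw [abs_div, abs_of_pos hq₀, div_lt_one hq₀]; exact hdom i h hβ
      simpa using (tendsto_pow_atTop_nhds_zero_of_abs_lt_one hlt).const_mul (β i)
  have hsum := tendsto_finsetSum Finset.univ fun i _ => hterm i
  simp only [Finset.sum_ite_eq', Finset.mem_univ, if_true] at hsum
  refine hsum.congr fun n => ?_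
  rw [Finset.sum_div]
  refine Finset.sum_congr rfl fun i _ => ?_
  rw [div_pow, mul_div_assoc]

theorem tendsto_tsum_tail_div_pow {a : ℕ → ℝ} {r c : ℝ} (hr₀ : 0 < r) (hr₁ : r < 1)
    (ha : Tendsto (fun n => a n / r ^ n) atTop (𝓝 c)) :
    Tendsto (fun n => (∑' k, a (n + 1 + k)) / r ^ n) atTop (𝓝 (c * r / (1 - r))) := by
  have hshift : ∀ n k,
      a (n + 1 + k) / r ^ n = r ^ (k + 1) * (a (n + 1 + k) / r ^ (n + 1 + k)) := by
    intro n k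
    rw [pow_add r (n + 1), pow_succ]
    field_simp
    ring
  have hlim : ∀ k, Tendsto (fun n => a (n + 1 + k) / r ^ n) atTop (𝓝 (r ^ (k + 1) * c)) := by
    intro k
    simp_rw [hshift]
    refine (ha.comp ?_).const_mul _
    exact tendsto_atTop_mono (fun n => show n ≤ n + 1 + k by omega) tendsto_id
  obtain ⟨N, hN⟩ := eventually_atTop.1 (ha.norm.eventually (gt_mem_nhds (lt_add_one ‖c‖)))
  have hbound : ∀ᶠ n in atTop, ∀ k, ‖a (n + 1 + k) / r ^ n‖ ≤ (‖c‖ + 1) * r ^ (k + 1) := by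
    filter_upwards [eventually_ge_atTop N] with n hn k
    rw [hshift, norm_mul, norm_pow, Real.norm_of_nonneg hr₀.le, mul_comm]
    gcongr
    exact (hN _ (by omega)).le
  have hsum : Summable fun k : ℕ => (‖c‖ + 1) * r ^ (k + 1) :=
    (summable_geometric_of_lt_one hr₀.le hr₁).mul_left ((‖c‖ + 1) * r) |>.congr fun k => by ring
  convert tendsto_tsum_of_dominated_convergence hsum hlim hbound using 1
  · ext n; rw [tsum_div_const]
  · simp_rw [pow_succ, mul_assoc, tsum_mul_right, tsum_geometric_of_lt_one hr₀.le hr₁]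
    congr 1; ring

theorem eventually_mul_tsum_tail_lt_mul {a : ℕ → ℝ} {r c A B : ℝ} (hr₀ : 0 < r) (hr₁ : r < 1)
    (hc : 0 < c) (hAB : A * r < B * (1 - r))
    (ha : Tendsto (fun n => |a n| / r ^ n) atTop (𝓝 c)) :
    ∀ᶠ n in atTop, A * ∑' k, |a (n + 1 + k)| < B * |a n| := by
  have htail := tendsto_tsum_tail_div_pow hr₀ hr₁ ha
  have hlim : A * (c * r / (1 - r)) < B * c := by
    rw [show A * (c * r / (1 - r)) = c * (A * r) / (1 - r) by ring, div_lt_iff₀ (by linarith)]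
    nlinarith [mul_lt_mul_of_pos_left hAB hc]
  filter_upwards [(htail.const_mul A).eventually_lt (ha.const_mul B) hlim] with n hn
  rw [← mul_div_assoc, ← mul_div_assoc] at hn
  exact (div_lt_div_iff_of_pos_right (pow_pos hr₀ n)).1 hn

theorem jones_estimate_lower (m : ℕ) (q β : Fin m → ℝ) (hq : StrictAnti q)
    (hqI : ∀ i, q i ∈ Set.Ico (1 / 6 : ℝ) (2 / 11)) (hβ : ∃ i, β i ≠ 0) :
    ∀ᶠ n in atTop,
      9 * ∑' k : ℕ, |∑ i, β i * q i ^ (n + 1 + k)| < 2 * |∑ i, β i * q i ^ n| := by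
  obtain ⟨i, hi⟩ := hβ
  obtain ⟨i₀, hi₀, hmax⟩ := Finset.exists_max_image {j | β j ≠ 0} q ⟨i, by simpa using hi⟩
  simp only [Finset.mem_filter, Finset.mem_univ, true_and] at hi₀ hmax
  have hpos : ∀ j, 0 < q j := fun j => lt_of_lt_of_le (by norm_num) (hqI j).1
  have hr : q i₀ < 2 / 11 := (hqI i₀).2
  have hlim := tendsto_sum_mul_pow_div_pow (β := β) (hpos i₀) fun j hj hβj =>
    (abs_of_pos (hpos j)).trans_lt ((hmax j hβj).lt_of_ne (hq.injective.ne hj))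
  refine eventually_mul_tsum_tail_lt_mul (a := fun n => ∑ j, β j * q j ^ n) (hpos i₀)
    (by linarith) (abs_pos.2 hi₀) (show 9 * q i₀ < 2 * (1 - q i₀) by linarith) ?_
  refine hlim.abs.congr fun n => ?_
  rw [abs_div, abs_of_pos (pow_pos (hpos i₀) n)]
end

section
/- Let q₁ > q₂ > ... > q_m be in [1/6, 2/11) and β₁, ..., β_m real numbers, not all zero. Then for all sufficiently large n, |β₁q₁ⁿ + ... + β_m q_mⁿ| ≤ 5 ∑_{k>n} |β₁q₁ᵏ + ... + β_m q_mᵏ|. -/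
open Set Filter Topology

/-!
The tail `∑_{k>n} F k` of `F k = ∑ βᵢ qᵢᵏ` is `∑ βᵢ qᵢⁿ⁺¹ / (1 - qᵢ)`, so five times it is
`∑ βᵢ cᵢ qᵢⁿ` with `cᵢ = 5 qᵢ / (1 - qᵢ)`, and `cᵢ ≥ 1` exactly when `qᵢ ≥ 1/6`. Both `F n` and
`∑ βᵢ cᵢ qᵢⁿ` are governed by the largest `qᵢ` with `βᵢ ≠ 0`; comparing leading coefficients gives
`|F n| ≤ 5 |∑_{k>n} F k| ≤ 5 ∑_{k>n} |F k|` for large `n`. If that `qᵢ` is `1/6`, it is the only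
term, `cᵢ = 1`, and the first inequality is an equality.
-/

theorem hasSum_sum_mul_pow_tail {ι : Type*} [Fintype ι] {q : ι → ℝ} (β : ι → ℝ)
    (hq0 : ∀ i, 0 ≤ q i) (hq1 : ∀ i, q i < 1) (n : ℕ) :
    HasSum (fun k : ℕ => ∑ i, β i * q i ^ (n + 1 + k))
      (∑ i, β i * q i ^ (n + 1) / (1 - q i)) := by
  refine hasSum_sum fun i _ => ?_
  have hterm : (fun k : ℕ => β i * q i ^ (n + 1 + k)) = fun k => β i * q i ^ (n + 1) * q i ^ k :=
    funext fun k => by rw [pow_add, mul_assoc]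
  rw [hterm, div_eq_mul_inv]
  exact (hasSum_geometric_of_lt_one (hq0 i) (hq1 i)).mul_left _

theorem abs_le_tsum_abs_of_hasSum {f : ℕ → ℝ} {a : ℝ} (hf : HasSum f a) :
    |a| ≤ ∑' k, |f k| := by
  simpa only [hf.tsum_eq, Real.norm_eq_abs] using
    norm_tsum_le_tsum_norm (f := f) (by simpa only [Real.norm_eq_abs] using hf.summable.abs)

theorem one_lt_five_mul_div_one_sub {x : ℝ} (h₀ : 1 / 6 < x) (h₁ : x < 1) :
    1 < 5 * x / (1 - x) := by
  rw [lt_div_iff₀ (by linarith)]; linarith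

section LeadingTerm

variable {ι : Type*} [Fintype ι] [LinearOrder ι] {q γ : ι → ℝ} {i₀ : ι}

theorem tendsto_sum_mul_div_pow_leading (hq : StrictAnti q) (hq0 : ∀ i, 0 ≤ q i)
    (hi₀ : 0 < q i₀) (hγ : ∀ i < i₀, γ i = 0) :
    Tendsto (fun n : ℕ => ∑ i, γ i * (q i / q i₀) ^ n) atTop (𝓝 (γ i₀)) := by
  rw [← Fintype.sum_pi_single' i₀ (γ i₀)]
  refine tendsto_finsetSum _ fun i _ => ?_
  rcases lt_trichotomy i i₀ with h | rfl | h
  · simp [hγ i h, h.ne]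
  · simp [div_self hi₀.ne']
  · have hr : q i / q i₀ < 1 := (div_lt_one hi₀).mpr (hq h)
    simpa [Pi.single_apply, h.ne'] using
      (tendsto_pow_atTop_nhds_zero_of_lt_one (div_nonneg (hq0 i) hi₀.le) hr).const_mul (γ i)

theorem eventually_abs_sum_mul_pow_le (hq : StrictAnti q) (hq0 : ∀ i, 0 ≤ q i)
    (hi₀ : 0 < q i₀) (β c : ι → ℝ) (hβ : ∀ i < i₀, β i = 0) (hβi₀ : β i₀ ≠ 0)
    (hc : 1 < |c i₀|) :
    ∀ᶠ n : ℕ in atTop, |∑ i, β i * q i ^ n| ≤ |∑ i, β i * c i * q i ^ n| := by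
  have hlim := (tendsto_sum_mul_div_pow_leading hq hq0 hi₀ hβ).abs.eventually_lt
    (tendsto_sum_mul_div_pow_leading (γ := fun i => β i * c i) hq hq0 hi₀
      fun i hi => by simp [hβ i hi]).abs
    (by rw [abs_mul]; exact lt_mul_of_one_lt_right (abs_pos.mpr hβi₀) hc)
  filter_upwards [hlim] with n hn
  have hscale : ∀ γ : ι → ℝ, ∑ i, γ i * q i ^ n = (∑ i, γ i * (q i / q i₀) ^ n) * q i₀ ^ n :=
    fun γ => by
      rw [Finset.sum_mul]
      exact Finset.sum_congr rfl fun i _ => by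
        rw [div_pow, mul_assoc, div_mul_cancel₀ _ (pow_pos hi₀ n).ne']
  rw [hscale, hscale (fun i => β i * c i), abs_mul, abs_mul]
  exact mul_le_mul_of_nonneg_right hn.le (abs_nonneg _)

theorem eventually_abs_sum_pow_le_abs_sum_five_mul_div (hq : StrictAnti q)
    (hqI : ∀ i, q i ∈ Ico (1 / 6 : ℝ) 1) (β : ι → ℝ) (hβ : ∃ i, β i ≠ 0) :
    ∀ᶠ n : ℕ in atTop,
      |∑ i, β i * q i ^ n| ≤ |∑ i, β i * (5 * q i / (1 - q i)) * q i ^ n| := by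
  have hq0 : ∀ i, 0 < q i := fun i => by linarith [(hqI i).1]
  obtain ⟨i₀, hmin⟩ := exists_minimal_of_wellFoundedLT (fun i => β i ≠ 0) hβ
  rcases (hqI i₀).1.eq_or_lt with hedge | hgt
  · have hc : ∀ i, β i ≠ 0 → 5 * q i / (1 - q i) = 1 := fun i hi => by
      have hqi : q i = 1 / 6 :=
        le_antisymm (hedge ▸ hq.antitone (not_lt.mp (hmin.not_lt hi))) (hqI i).1
      norm_num [hqi]
    refine Eventually.of_forall fun n => (congrArg _ (Finset.sum_congr rfl fun i _ => ?_)).le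
    by_cases hi : β i = 0
    · simp [hi]
    · rw [hc i hi, mul_one]
  · exact eventually_abs_sum_mul_pow_le hq (fun i => (hq0 i).le) (hq0 i₀) β _
      (fun i hi => not_not.mp (hmin.not_prop_of_lt hi)) hmin.prop
      (lt_abs.mpr (Or.inl (one_lt_five_mul_div_one_sub hgt (hqI i₀).2)))

end LeadingTerm

theorem jones_estimate_upper (m : ℕ) (q β : Fin m → ℝ) (hq : StrictAnti q)
    (hqI : ∀ i, q i ∈ Set.Ico (1 / 6 : ℝ) (2 / 11)) (hβ : ∃ i, β i ≠ 0) :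
    ∀ᶠ n in atTop,
      |∑ i, β i * q i ^ n| ≤ 5 * ∑' k : ℕ, |∑ i, β i * q i ^ (n + 1 + k)| := by
  have hq1 : ∀ i, q i < 1 := fun i => by linarith [(hqI i).2]
  have hqI' : ∀ i, q i ∈ Ico (1 / 6 : ℝ) 1 := fun i => ⟨(hqI i).1, hq1 i⟩
  filter_upwards [eventually_abs_sum_pow_le_abs_sum_five_mul_div hq hqI' β hβ] with n hn
  have htail : ∑ i, β i * (5 * q i / (1 - q i)) * q i ^ n
      = 5 * ∑ i, β i * q i ^ (n + 1) / (1 - q i) := by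
    rw [Finset.mul_sum]
    refine Finset.sum_congr rfl fun i _ => ?_
    have : 1 - q i ≠ 0 := (sub_pos.mpr (hq1 i)).ne'
    field_simp
    ring
  calc |∑ i, β i * q i ^ n| ≤ _ := hn
    _ = 5 * |∑ i, β i * q i ^ (n + 1) / (1 - q i)| := by
      rw [htail, abs_mul, abs_of_pos (by norm_num : (0 : ℝ) < 5)]
    _ ≤ _ := by
      gcongr
      exact abs_le_tsum_abs_of_hasSum
        (hasSum_sum_mul_pow_tail β (fun i => (hqI' i).1.trans' (by norm_num)) hq1 n)
end

section
/- Let Y be an infinite-dimensional closed linear subspace of ℓ¹. Then there exists y ∈ Y such that E(y) contains a nondegenerate interval. Consequently, the set {x ∈ ℓ¹ : E(x) is nowhere dense} is not spaceable in ℓ¹. -/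
open Set Filter Topology

/-!
If `|x n| ≤ ∑_{i > n} |x i|` for every `n` (Kakeya's condition), choosing the terms of a subsum
greedily reaches every point of an interval of length `∑ |x n|`, so `E(x)` contains that interval.

In an infinite-dimensional closed subspace `Y ⊆ ℓ¹` there are unit vectors `u k ∈ Y` vanishing
below any prescribed index. Choosing `u k` to vanish below `N k`, where `N (k + 1)` is so large
that the partial sum `∑_{j ≤ k} (3/4)^j u j` has almost no mass beyond it, the vector
`y = ∑ (3/4)^k u k ∈ Y` has, up to a `1%` error, mass `(3/4)^k` on the block `[N k, N (k + 1))`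
and coordinates of size at most `(3/4)^k` there. The two following blocks carry mass about
`(3/4)^(k+1) + (3/4)^(k+2) > (3/4)^k`, so `y` satisfies Kakeya's condition.
-/

local notation "ℓ¹" => lp (fun _ : ℕ => ℝ) 1

theorem exists_sum_range_indicator_le_le {x R : ℕ → ℝ} (hR : ∀ n, R n = x n + R (n + 1))
    (hx : ∀ n, x n ≤ R (n + 1)) {t : ℝ} (ht : t ∈ Icc 0 (R 0)) :
    ∃ A : Set ℕ, ∀ n, ∑ i ∈ Finset.range n, A.indicator x i ≤ t ∧
      t ≤ ∑ i ∈ Finset.range n, A.indicator x i + R n := by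
  let s : ℕ → ℝ := fun n => Nat.rec 0 (fun m sm => if sm + x m ≤ t then sm + x m else sm) n
  have hs_succ : ∀ n, s (n + 1) = if s n + x n ≤ t then s n + x n else s n := fun n => rfl
  have hs : ∀ n, ∑ i ∈ Finset.range n, {n | s n + x n ≤ t}.indicator x i = s n := by
    intro n
    induction n with
    | zero => rfl
    | succ n ih =>
      rw [Finset.sum_range_succ, ih, hs_succ]
      by_cases h : s n + x n ≤ t <;> simp [h]
  refine ⟨{n | s n + x n ≤ t}, fun n => ?_⟩
  rw [hs]
  induction n with
  | zero => exact ⟨ht.1, by simpa [s] using ht.2⟩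
  | succ n ih =>
    rw [hs_succ]
    split_ifs
    · constructor <;> linarith [hR n]
    · constructor <;> linarith [hx n]

theorem Icc_zero_tsum_subset_achSet {x : ℕ → ℝ} (hx : ∀ n, 0 ≤ x n) (hsum : Summable x)
    (hkakeya : ∀ n, x n ≤ ∑' i, x (n + 1 + i)) : Icc 0 (∑' n, x n) ⊆ achSet x := by
  intro t ht
  set R : ℕ → ℝ := fun n => ∑' i, x (n + i)
  have hR : ∀ n, R n = x n + R (n + 1) := fun n => by
    have h := (hsum.comp_injective (add_right_injective n)).tsum_eq_zero_add
    simp only [Function.comp_apply, add_zero] at h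
    rw [show R n = _ from h]
    exact congrArg _ (tsum_congr fun i => by congr 1; omega)
  have hR_tendsto : Tendsto R atTop (𝓝 0) := by simpa [R, add_comm] using tendsto_sum_nat_add x
  obtain ⟨A, hA⟩ := exists_sum_range_indicator_le_le hR hkakeya (by simpa [R] using ht)
  refine ⟨A, hasSum_subtype_iff_indicator.2 <|
    (hasSum_iff_tendsto_nat_of_nonneg (fun n => indicator_nonneg (fun n _ => hx n) n) t).2 ?_⟩
  refine tendsto_of_tendsto_of_tendsto_of_le_of_le (g := fun n => t - R n) (h := fun _ => t)
    (by simpa using hR_tendsto.const_sub t) tendsto_const_nhds (fun n => ?_) (fun n => (hA n).1)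
  linarith [(hA n).2]

theorem indicator_symmDiff_neg_eq (x : ℕ → ℝ) (B : Set ℕ) (n : ℕ) :
    (symmDiff B {n | x n < 0}).indicator x n =
      B.indicator (fun n => |x n|) n - {n | x n < 0}.indicator (fun n => |x n|) n := by
  by_cases hx : x n < 0
  · by_cases hB : n ∈ B
    · simp [Set.indicator, Set.mem_symmDiff, hB, hx]
    · simp [Set.indicator, Set.mem_symmDiff, hB, hx, abs_of_neg hx]
  · by_cases hB : n ∈ B
    · simp [Set.indicator, Set.mem_symmDiff, hB, hx, abs_of_nonneg (not_lt.1 hx)]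
    · simp [Set.indicator, Set.mem_symmDiff, hB, hx]

theorem exists_Icc_subset_achSet_of_abs_le_tailSum {x : ℕ → ℝ} (hsum : Summable fun n => |x n|)
    (hkakeya : ∀ n, |x n| ≤ tailSum x n) (hx : x ≠ 0) :
    ∃ a b, a < b ∧ Icc a b ⊆ achSet x := by
  obtain ⟨c, hc⟩ : Summable ({n | x n < 0}.indicator fun n => |x n|) :=
    hsum.of_nonneg_of_le (indicator_nonneg fun _ _ => abs_nonneg _)
      (indicator_le_self' fun _ _ => abs_nonneg _)
  obtain ⟨n₀, hn₀⟩ := Function.ne_iff.1 hx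
  have hpos : 0 < ∑' n, |x n| := hsum.tsum_pos (fun n => abs_nonneg _) n₀ (abs_pos.2 hn₀)
  refine ⟨-c, ∑' n, |x n| - c, by linarith, fun t ⟨ht₁, ht₂⟩ => ?_⟩
  obtain ⟨B, hB⟩ := Icc_zero_tsum_subset_achSet (fun n => abs_nonneg (x n)) hsum
    (fun n => hkakeya n) (show t + c ∈ Icc 0 _ from ⟨by linarith, by linarith⟩)
  -- flipping the membership of the negative terms turns a subsum of `|x|` into one of `x`
  refine ⟨symmDiff B {n | x n < 0}, hasSum_subtype_iff_indicator.2 ?_⟩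
  have h := ((hasSum_subtype_iff_indicator (f := fun n => |x n|)).1 hB).sub hc
  rwa [add_sub_cancel_right, ← funext (indicator_symmDiff_neg_eq x B)] at h

-- the mass of `f` from index `N` on; `tailSum f n` is definitionally `tailNorm f (n + 1)`
noncomputable def tailNorm (f : ℕ → ℝ) (N : ℕ) : ℝ := ∑' i, |f (N + i)|

theorem sum_Ico_add_tailNorm {f : ℕ → ℝ} (hf : Summable fun i => |f i|) {a b : ℕ} (hab : a ≤ b) :
    ∑ i ∈ Finset.Ico a b, |f i| + tailNorm f b = tailNorm f a := by
  have h := (hf.comp_injective (add_right_injective a)).sum_add_tsum_nat_add (b - a)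
  simp only [Function.comp_apply] at h
  rw [Finset.sum_Ico_eq_sum_range, tailNorm, tailNorm, ← h]
  exact congrArg _ (tsum_congr fun i => by congr 2; omega)

theorem sum_Ico_le_tailNorm {f : ℕ → ℝ} (hf : Summable fun i => |f i|) {N a : ℕ} (h : N ≤ a)
    (b : ℕ) : ∑ i ∈ Finset.Ico a b, |f i| ≤ tailNorm f N :=
  calc ∑ i ∈ Finset.Ico a b, |f i| ≤ ∑ i ∈ Finset.Ico N (max a b), |f i| :=
        Finset.sum_le_sum_of_subset_of_nonneg (Finset.Ico_subset_Ico h (le_max_right a b))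
          fun _ _ _ => abs_nonneg _
    _ ≤ tailNorm f N := by
        rw [← sum_Ico_add_tailNorm hf (h.trans (le_max_left a b))]
        exact le_add_of_nonneg_right (tsum_nonneg fun _ => abs_nonneg _)

theorem abs_le_tailNorm {f : ℕ → ℝ} (hf : Summable fun i => |f i|) {N n : ℕ} (h : N ≤ n) :
    |f n| ≤ tailNorm f N := by
  simpa using sum_Ico_le_tailNorm hf h (n + 1)

theorem tailNorm_eq_tsum_of_eq_zero {f : ℕ → ℝ} (hf : Summable fun i => |f i|) {N : ℕ}
    (h : ∀ i < N, f i = 0) : tailNorm f N = ∑' i, |f i| := by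
  have h0 := sum_Ico_add_tailNorm hf (Nat.zero_le N)
  rw [Finset.sum_eq_zero fun i hi => by simp [h i (Finset.mem_Ico.1 hi).2]] at h0
  simpa [tailNorm] using h0

theorem tendsto_tailNorm (f : ℕ → ℝ) : Tendsto (tailNorm f) atTop (𝓝 0) := by
  convert tendsto_sum_nat_add fun i => |f i| using 2 with N
  exact tsum_congr fun i => by rw [add_comm]

theorem sub_tailNorm_le_sum_Ico_abs_add_mul {p u : ℕ → ℝ} (hp : Summable fun i => |p i|)
    (hu : Summable fun i => |u i|) {a b : ℕ} (hab : a ≤ b) (hua : ∀ i < a, u i = 0) {r : ℝ}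
    (hr : 0 ≤ r) :
    r * ∑' i, |u i| - tailNorm p a - tailNorm (fun i => p i + r * u i) b ≤
      ∑ i ∈ Finset.Ico a b, |p i + r * u i| := by
  have hpu : Summable fun i => |p i + r * u i| :=
    (hp.add (hu.mul_left |r|)).of_nonneg_of_le (fun _ => abs_nonneg _) fun i => by
      simpa [abs_mul] using abs_add_le (p i) (r * u i)
  have hshift {f : ℕ → ℝ} (hf : Summable fun i => |f i|) : Summable fun i => |f (a + i)| :=
    hf.comp_injective (add_right_injective a)
  have hmass : r * ∑' i, |u i| ≤ tailNorm (fun i => p i + r * u i) a + tailNorm p a :=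
    calc r * ∑' i, |u i| = ∑' i, |r * u (a + i)| := by
          rw [← tailNorm_eq_tsum_of_eq_zero hu hua, tailNorm, ← tsum_mul_left]
          simp [abs_mul, abs_of_nonneg hr]
      _ ≤ ∑' i, (|p (a + i) + r * u (a + i)| + |p (a + i)|) := by
          refine Summable.tsum_le_tsum (fun i => ?_) ?_ ((hshift hpu).add (hshift hp))
          · simpa using abs_sub (p (a + i) + r * u (a + i)) (p (a + i))
          · simpa [abs_mul] using (hshift hu).mul_left |r|
      _ = _ := (hshift hpu).tsum_add (hshift hp)
  linarith [sum_Ico_add_tailNorm hpu hab]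

theorem abs_add_mul_le_tailNorm_add {p u : ℕ → ℝ} (hp : Summable fun i => |p i|)
    (hu : ∀ i, |u i| ≤ 1) {r : ℝ} (hr : 0 ≤ r) {a n : ℕ} (h : a ≤ n) :
    |p n + r * u n| ≤ tailNorm p a + r :=
  calc |p n + r * u n| ≤ |p n| + r * |u n| := by
        rw [← abs_of_nonneg hr, ← abs_mul, abs_of_nonneg hr]
        exact abs_add_le _ _
    _ ≤ tailNorm p a + r := add_le_add (abs_le_tailNorm hp h) (mul_le_of_le_one_right hr (hu n))

theorem abs_le_tailSum_of_blocks {y : ℕ → ℝ} (hy : Summable fun n => |y n|) {N : ℕ → ℕ}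
    (hN : StrictMono N) (hN0 : N 0 = 0) {b c : ℕ → ℝ}
    (hb : ∀ k n, N k ≤ n → n < N (k + 1) → |y n| ≤ b k)
    (hc : ∀ k, c k ≤ ∑ n ∈ Finset.Ico (N k) (N (k + 1)), |y n|)
    (hbc : ∀ k, b k ≤ c (k + 1) + c (k + 2)) (n : ℕ) : |y n| ≤ tailSum y n := by
  obtain ⟨k, hkn, hnk⟩ :=
    hN.exists_between_of_tendsto_atTop hN.tendsto_atTop (x := n + 1) (by omega)
  have hmono : ∀ j, N j ≤ N (j + 1) := fun j => (hN (Nat.lt_succ_self j)).le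
  calc |y n| ≤ b k := hb k n (by omega) (by omega)
    _ ≤ c (k + 1) + c (k + 2) := hbc k
    _ ≤ ∑ i ∈ Finset.Ico (N (k + 1)) (N (k + 3)), |y i| := by
        rw [← Finset.sum_Ico_consecutive _ (hmono (k + 1)) (hmono (k + 2))]
        exact add_le_add (hc (k + 1)) (hc (k + 2))
    _ ≤ tailSum y n := sum_Ico_le_tailNorm hy hnk _

theorem hasSum_abs_lp_one (f : ℓ¹) : HasSum (fun i => |f i|) ‖f‖ := by
  simpa [Real.norm_eq_abs] using lp.hasSum_norm (p := 1) (by norm_num) f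

theorem lp.apply_eq_sum_of_hasSum {α : Type*} {E : α → Type*} [∀ i, NormedAddCommGroup (E i)]
    {p : ENNReal} [Fact (1 ≤ p)] {v : ℕ → lp E p} {y : lp E p} (hv : HasSum v y) {k : ℕ} {i : α}
    (h : ∀ j ≥ k, v j i = 0) : y i = ∑ j ∈ Finset.range k, v j i :=
  (Pi.hasSum.1 (hv.map (lp.coeFnAddMonoidHom E p) lp.uniformContinuous_coe.continuous) i).unique
    (hasSum_sum_of_ne_finset_zero fun j hj => h j (by simpa using hj))

theorem exists_mem_norm_eq_one_forall_lt_eq_zero (Y : Submodule ℝ ℓ¹)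
    (hY : ¬ FiniteDimensional ℝ Y) (N : ℕ) : ∃ u ∈ Y, ‖u‖ = 1 ∧ ∀ i < N, u i = 0 := by
  let π : Y →ₗ[ℝ] Fin N → ℝ := LinearMap.pi (fun i => (lp.evalₗ _ 1 i.1).comp Y.subtype)
  obtain ⟨v, hv, hv0⟩ := Submodule.ne_bot_iff _ |>.1 fun hbot =>
    hY (.of_injective π (LinearMap.ker_eq_bot.1 hbot))
  have hv0' : (v : ℓ¹) ≠ 0 := by simpa using hv0
  refine ⟨‖(v : ℓ¹)‖⁻¹ • (v : ℓ¹), Y.smul_mem _ v.2, by simp [norm_smul, hv0'], fun i hi => ?_⟩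
  have : (v : ℓ¹) i = 0 := congrFun hv ⟨i, hi⟩
  simp [this]

theorem exists_blocks (Y : Submodule ℝ ℓ¹) (hY : ¬ FiniteDimensional ℝ Y) (w δ : ℕ → ℝ)
    (hδ : ∀ k, 0 < δ k) :
    ∃ (N : ℕ → ℕ) (u : ℕ → ℓ¹), StrictMono N ∧ N 0 = 0 ∧
      (∀ k, u k ∈ Y ∧ ‖u k‖ = 1 ∧ ∀ i < N k, u k i = 0) ∧
      ∀ k, tailNorm ⇑(∑ j ∈ Finset.range k, w j • u j) (N k) ≤ δ k := by
  choose uf huf using exists_mem_norm_eq_one_forall_lt_eq_zero Y hY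
  choose next hnext_gt hnext_le using fun (k n : ℕ) (p : ℓ¹) =>
    ((eventually_gt_atTop n).and ((tendsto_tailNorm p).eventually (ge_mem_nhds (hδ k)))).exists
  -- the state after `k` steps is `(N k, ∑ j < k, w j • u j)`
  let F : ℕ → ℕ × ℓ¹ := fun k => Nat.rec (0, 0)
    (fun k s => (next (k + 1) s.1 (s.2 + w k • uf s.1), s.2 + w k • uf s.1)) k
  have hF : ∀ k, (F k).2 = ∑ j ∈ Finset.range k, w j • uf (F j).1 := by
    intro k
    induction k with
    | zero => rfl
    | succ k ih => rw [Finset.sum_range_succ, ← ih]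
  refine ⟨fun k => (F k).1, fun k => uf (F k).1, strictMono_nat_of_lt_succ fun k => hnext_gt _ _ _,
    rfl, fun k => huf _, fun k => ?_⟩
  rw [← hF]
  cases k with
  | zero => simpa [F, tailNorm] using (hδ 0).le
  | succ k => exact hnext_le _ _ _

theorem exists_mem_ne_zero_abs_le_tailSum (Y : Submodule ℝ ℓ¹) (hYc : IsClosed (Y : Set ℓ¹))
    (hY : ¬ FiniteDimensional ℝ Y) : ∃ y ∈ Y, y ≠ 0 ∧ ∀ n, |y n| ≤ tailSum y n := by
  set ρ : ℝ := 3 / 4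
  obtain ⟨N, u, hN, hN0, hu, hP⟩ :=
    exists_blocks Y hY (ρ ^ ·) (fun k => ρ ^ k / 100) fun k => by positivity
  set P : ℕ → ℓ¹ := fun k => ∑ j ∈ Finset.range k, ρ ^ j • u j
  have hP_succ : ∀ k, ⇑(P (k + 1)) = fun i => P k i + ρ ^ k * u k i := fun k => by
    simp only [P, Finset.sum_range_succ]
    rfl
  have hsum : Summable fun k => ρ ^ k • u k := .of_norm <| by
    simpa [norm_smul, (hu _).2.1] using
      summable_geometric_of_lt_one (by norm_num) (by norm_num : ρ < 1)
  set y := ∑' k, ρ ^ k • u k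
  have hyY : y ∈ Y := hYc.mem_of_tendsto hsum.hasSum.tendsto_sum_nat
    (.of_forall fun k => Y.sum_mem fun j _ => Y.smul_mem _ (hu j).1)
  have hy : ∀ k n, n < N k → y n = P k n := fun k n hn => by
    rw [lp.apply_eq_sum_of_hasSum hsum.hasSum (k := k) fun j hj => ?_]
    · simp only [P, lp.coeFn_sum, Finset.sum_apply]
    · simp [(hu j).2.2 n (hn.trans_le (hN.monotone hj))]
  have hb : ∀ k n, N k ≤ n → n < N (k + 1) → |y n| ≤ ρ ^ k / 100 + ρ ^ k := fun k n hkn hnk => by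
    rw [hy _ _ hnk, hP_succ]
    exact (abs_add_mul_le_tailNorm_add (hasSum_abs_lp_one _).summable
      (fun i => (lp.norm_apply_le_norm one_ne_zero _ i).trans_eq (hu k).2.1) (by positivity)
      hkn).trans (add_le_add_left (hP k) _)
  have hc : ∀ k, ρ ^ k - ρ ^ k / 100 - ρ ^ (k + 1) / 100 ≤
      ∑ n ∈ Finset.Ico (N k) (N (k + 1)), |y n| := fun k => by
    have h := sub_tailNorm_le_sum_Ico_abs_add_mul (hasSum_abs_lp_one (P k)).summable
      (hasSum_abs_lp_one (u k)).summable (hN (Nat.lt_succ_self k)).le (hu k).2.2 (r := ρ ^ k)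
      (by positivity)
    rw [(hasSum_abs_lp_one (u k)).tsum_eq, (hu k).2.1, mul_one, ← hP_succ] at h
    rw [Finset.sum_congr rfl fun n hn => by rw [hy _ _ (Finset.mem_Ico.1 hn).2, hP_succ]]
    linarith [hP k, hP (k + 1)]
  refine ⟨y, hyY, fun hy0 => ?_,
    abs_le_tailSum_of_blocks (hasSum_abs_lp_one y).summable hN hN0 hb hc fun k => ?_⟩
  · have h0 := hc 0
    norm_num [hy0, ρ] at h0
  · simp only [pow_succ]
    nlinarith [pow_pos (by norm_num : (0 : ℝ) < ρ) k]

theorem exists_mem_ne_zero_Icc_subset_achSet (Y : Submodule ℝ ℓ¹) (hYc : IsClosed (Y : Set ℓ¹))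
    (hY : ¬ FiniteDimensional ℝ Y) :
    ∃ y ∈ Y, y ≠ 0 ∧ ∃ a b : ℝ, a < b ∧ Icc a b ⊆ achSet fun n => y n := by
  obtain ⟨y, hyY, hy0, hkakeya⟩ := exists_mem_ne_zero_abs_le_tailSum Y hYc hY
  exact ⟨y, hyY, hy0, exists_Icc_subset_achSet_of_abs_le_tailSum (hasSum_abs_lp_one y).summable
    hkakeya fun h => hy0 (lp.ext h)⟩

theorem not_isNowhereDense_of_Icc_subset {s : Set ℝ} {a b : ℝ} (hab : a < b) (h : Icc a b ⊆ s) :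
    ¬ IsNowhereDense s := fun hs => by
  have hIcc := hs.mono h
  rw [IsNowhereDense, closure_Icc, interior_Icc] at hIcc
  exact (nonempty_Ioo.2 hab).ne_empty hIcc

theorem not_spaceable_nowhereDense_achSet :
    (∀ Y : Submodule ℝ (lp (fun _ : ℕ => ℝ) 1), IsClosed (Y : Set (lp (fun _ : ℕ => ℝ) 1)) →
      ¬ FiniteDimensional ℝ Y →
      ∃ y ∈ Y, ∃ a b : ℝ, a < b ∧ Set.Icc a b ⊆ achSet fun n => y n) ∧
    ¬ ∃ Y : Submodule ℝ (lp (fun _ : ℕ => ℝ) 1),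
        IsClosed (Y : Set (lp (fun _ : ℕ => ℝ) 1)) ∧ ¬ FiniteDimensional ℝ Y ∧
        (Y : Set (lp (fun _ : ℕ => ℝ) 1)) ⊆
          {x | IsNowhereDense (achSet fun n => x n)} ∪ {0} := by
  refine ⟨fun Y hYc hY => ?_, fun ⟨Y, hYc, hY, hsub⟩ => ?_⟩
  · obtain ⟨y, hyY, -, hIcc⟩ := exists_mem_ne_zero_Icc_subset_achSet Y hYc hY
    exact ⟨y, hyY, hIcc⟩
  · obtain ⟨y, hyY, hy0, a, b, hab, hIcc⟩ := exists_mem_ne_zero_Icc_subset_achSet Y hYc hY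
    exact not_isNowhereDense_of_Icc_subset hab hIcc ((hsub hyY).resolve_right hy0)
end
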